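/- For every nonnegative integer n, Σ_{j=0}^{n} (q;q²)_j q^{-(n+1)(2j+1)} / (q²;q²)_j = (q;q²)_{n+1}/(q²;q²)_{n+1} · Σ_{j=-n-1}^{n} q^{-j(2j+1)}, as an identity of rational functions in q. -/

import Mathlib

/-!
Write `a_j = (q;q²)_j/(q²;q²)_j`, `x = q⁻¹`, `m = n + 1`, and pair the terms `j` and `-j-1` on the
right. The left side `L m = ∑_{j<m} a_j x^(m(2j+1))` satisfies
`(1 - q^(2m+2)) L (m+1) = (1 - q^(2m+1)) (L m + a_m x^(m(2m+1))) + K (m+1)`,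
because the difference of the summands telescopes in `j` with the WZ-type certificate
`K j = a_j (1 - q^(2j)) q^(2m+2) x^((m+1)(2j+1))`. Since
`a_{m+1} (1 - q^(2m+2)) = a_m (1 - q^(2m+1))`, this is also the recurrence of the right side, and
both sides vanish at `m = 0`.
-/

open Finset

/-- Finite q-Pochhammer symbol `(a;q)_n`. -/
noncomputable def qp (a q : ℂ) (n : ℕ) : ℂ := ∏ k ∈ Finset.range n, (1 - a * q ^ k)

theorem qp_succ (a Q : ℂ) (m : ℕ) : qp a Q (m + 1) = qp a Q m * (1 - a * Q ^ m) :=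
  prod_range_succ _ _

noncomputable def qpRatio (q : ℂ) (j : ℕ) : ℂ := qp q (q ^ 2) j / qp (q ^ 2) (q ^ 2) j

theorem qpRatio_succ_mul {q : ℂ} {j : ℕ} (h : 1 - q ^ (2 * j + 2) ≠ 0) :
    qpRatio q (j + 1) * (1 - q ^ (2 * j + 2)) = qpRatio q j * (1 - q ^ (2 * j + 1)) := by
  have hodd : q * (q ^ 2) ^ j = q ^ (2 * j + 1) := by ring
  have heven : q ^ 2 * (q ^ 2) ^ j = q ^ (2 * j + 2) := by ring
  rw [qpRatio, qpRatio, qp_succ, qp_succ, hodd, heven, div_mul_eq_mul_div,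
    mul_div_mul_right _ _ h, mul_div_right_comm]

theorem one_sub_pow_ne_zero_of_norm_lt_one {𝕜 : Type*} [NormedDivisionRing 𝕜] {q : 𝕜}
    (hq : ‖q‖ < 1) {k : ℕ} (hk : k ≠ 0) : 1 - q ^ k ≠ 0 := by
  intro h
  have := congrArg norm (sub_eq_zero.mp h)
  rw [norm_one, norm_pow] at this
  exact (pow_lt_one₀ (norm_nonneg q) hq hk).ne this.symm

theorem sum_Icc_neg_sub_one_eq_sum_range {M : Type*} [AddCommMonoid M] (f : ℤ → M) (n : ℕ) :
    ∑ j ∈ Icc (-(n : ℤ) - 1) n, f j = ∑ i ∈ range (n + 1), (f i + f (-i - 1)) := by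
  induction n with
  | zero =>
    have : Icc (-((0 : ℕ) : ℤ) - 1) ((0 : ℕ) : ℤ) = {0, -1} := by ext; simp; omega
    rw [this, sum_pair (by decide)]
    simp
  | succ n ih =>
    have hIcc : Icc (-((n + 1 : ℕ) : ℤ) - 1) ((n + 1 : ℕ) : ℤ) =
        insert ((n : ℤ) + 1) (insert (-((n : ℤ) + 1) - 1) (Icc (-(n : ℤ) - 1) n)) := by
      ext; simp; omega
    rw [hIcc, sum_insert (by simp; omega), sum_insert (by simp; omega), ih,
      sum_range_succ _ (n + 1)]
    push_cast
    abel

section Telescoping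

variable {q x : ℂ}

noncomputable def telescopingTerm (q x : ℂ) (m j : ℕ) : ℂ :=
  qpRatio q j * (1 - q ^ (2 * j)) * q ^ (2 * m + 2) * x ^ ((m + 1) * (2 * j + 1))

theorem telescopingTerm_succ_sub (hqx : q * x = 1) {m j : ℕ} (h : 1 - q ^ (2 * j + 2) ≠ 0) :
    telescopingTerm q x m (j + 1) - telescopingTerm q x m j =
      (1 - q ^ (2 * m + 2)) * (qpRatio q j * x ^ ((m + 1) * (2 * j + 1))) -
        (1 - q ^ (2 * m + 1)) * (qpRatio q j * x ^ (m * (2 * j + 1))) := by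
  have hm : (q * x) ^ (2 * m + 2) = 1 := by rw [hqx, one_pow]
  have hj : (q * x) ^ (2 * j + 1) = 1 := by rw [hqx, one_pow]
  unfold telescopingTerm
  linear_combination (q ^ (2 * m + 2) * x ^ ((m + 1) * (2 * j + 1)) * x ^ (2 * m + 2)) *
      qpRatio_succ_mul h +
    (qpRatio q j * (1 - q ^ (2 * j + 1)) * x ^ ((m + 1) * (2 * j + 1))) * hm -
    ((1 - q ^ (2 * m + 1)) * qpRatio q j * x ^ (m * (2 * j + 1))) * hj

theorem sum_qpRatio_mul_pow_eq (hqx : q * x = 1) (hq : ∀ k : ℕ, 1 - q ^ (2 * k + 2) ≠ 0)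
    (m : ℕ) :
    ∑ j ∈ range m, qpRatio q j * x ^ (m * (2 * j + 1)) =
      qpRatio q m * ∑ i ∈ range m, (x ^ (i * (2 * i + 1)) + x ^ ((i + 1) * (2 * i + 1))) := by
  induction m with
  | zero => simp
  | succ m ih =>
    have htel := sum_range_sub (telescopingTerm q x m) (m + 1)
    simp only [telescopingTerm_succ_sub hqx (hq _), sum_sub_distrib, ← mul_sum] at htel
    rw [sum_range_succ (fun j ↦ qpRatio q j * x ^ (m * (2 * j + 1))), ih] at htel
    have hm : (q * x) ^ (2 * m + 2) = 1 := by rw [hqx, one_pow]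
    apply mul_left_cancel₀ (hq m)
    rw [sum_range_succ (fun i ↦ x ^ (i * (2 * i + 1)) + x ^ ((i + 1) * (2 * i + 1))) m]
    simp only [telescopingTerm, mul_zero, pow_zero, sub_self, zero_mul, sub_zero] at htel
    set T := ∑ i ∈ range m, (x ^ (i * (2 * i + 1)) + x ^ ((i + 1) * (2 * i + 1)))
    linear_combination htel - (T + x ^ (m * (2 * m + 1))) * qpRatio_succ_mul (hq m) +
      (1 - q ^ (2 * m + 2)) * qpRatio q (m + 1) * x ^ ((m + 1) * (2 * m + 1)) * hm

end Telescoping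

/-- `Σ_{j=0}^n (q;q²)_j q^{-(n+1)(2j+1)}/(q²;q²)_j
      = (q;q²)_{n+1}/(q²;q²)_{n+1} · Σ_{j=-n-1}^n q^{-j(2j+1)}`,
    as an identity of rational functions (stated for all `q` with `0 < |q| < 1`). -/
theorem stmt10 (n : ℕ) (q : ℂ) (hq : ‖q‖ < 1) (hq0 : q ≠ 0) :
    ∑ j ∈ Finset.range (n + 1),
        qp q (q ^ 2) j * q ^ (-(((n : ℤ) + 1) * (2 * j + 1))) / qp (q ^ 2) (q ^ 2) j =
      qp q (q ^ 2) (n + 1) / qp (q ^ 2) (q ^ 2) (n + 1) *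
        ∑ j ∈ Finset.Icc (-(n : ℤ) - 1) (n : ℤ), q ^ (-(j * (2 * j + 1))) := by
  have zpow_neg_eq : ∀ (e : ℤ) (k : ℕ), e = k → q ^ (-e) = q⁻¹ ^ k := by
    rintro _ k rfl
    rw [← inv_zpow', zpow_natCast]
  have hsum := sum_qpRatio_mul_pow_eq (mul_inv_cancel₀ hq0)
    (fun k ↦ one_sub_pow_ne_zero_of_norm_lt_one hq (Nat.succ_ne_zero _)) (n + 1)
  rw [sum_Icc_neg_sub_one_eq_sum_range]
  convert hsum using 1
  · refine sum_congr rfl fun j _ ↦ ?_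
    rw [mul_div_right_comm, zpow_neg_eq _ ((n + 1) * (2 * j + 1)) (by push_cast; ring)]
    rfl
  · refine congrArg _ (sum_congr rfl fun i _ ↦ ?_)
    rw [zpow_neg_eq _ (i * (2 * i + 1)) (by push_cast; ring),
      zpow_neg_eq _ ((i + 1) * (2 * i + 1)) (by push_cast; ring)]
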